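/- Let G be a group with descending q-central sequence G^(i) and set G^[3] = G/G^(3). Then there is a central extension 1 → ([G,G]/([[G,G],G]·([G,G] ∩ G^{q²})))/q → G^[3] → (G/[G,G])/q² → 1; in particular the image of [G,G] in G^[3] is central in G^[3] and is annihilated by q, and the quotient of G^[3] by this image is isomorphic to G_ab/q² (the abelianization modulo q²-th powers). -/

import Mathlib

/-- The commutator convention of the paper: `[x,y] = x⁻¹y⁻¹xy`. -/
def pComm {G : Type*} [Group G] (x y : G) : G := x⁻¹ * y⁻¹ * x * y

/-- The subgroup generated by `q`-th powers of elements of `H`. -/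
def qPow {G : Type*} [Group G] (q : ℕ) (H : Subgroup G) : Subgroup G :=
  Subgroup.closure {x : G | ∃ h ∈ H, x = h ^ q}

/-- `H^q [H,G]`: the subgroup generated by `q`-th powers of elements of `H`
together with all commutators `[h,g]`, `h ∈ H`, `g ∈ G`. -/
def qVerbal {G : Type*} [Group G] (q : ℕ) (H : Subgroup G) : Subgroup G :=
  Subgroup.closure ({x : G | ∃ h ∈ H, x = h ^ q} ∪
    {x : G | ∃ h ∈ H, ∃ g : G, x = pComm h g})

/-- The descending q-central sequence; `qcs q G i` is `G^(i+1)` in the paper's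
(1-based) notation, i.e. `qcs q G 0 = G` and `qcs q G (i+1) = (G^(i+1))^q [G^(i+1), G]`. -/
def qcs (q : ℕ) (G : Type*) [Group G] : ℕ → Subgroup G
  | 0 => ⊤
  | i + 1 => qVerbal q (qcs q G i)

theorem qVerbal_normal {G : Type*} [Group G] (q : ℕ) {H : Subgroup G} (hH : H.Normal) :
    (qVerbal q H).Normal := by
  constructor
  intro n hn g
  set S : Set G := {x : G | ∃ h ∈ H, x = h ^ q} ∪ {x : G | ∃ h ∈ H, ∃ g : G, x = pComm h g} with hS
  have himg : (MulAut.conj g) '' S ⊆ (Subgroup.closure S : Set G) := by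
    rintro _ ⟨x, hx, rfl⟩
    rcases hx with ⟨h, hh, rfl⟩ | ⟨h, hh, g', rfl⟩
    · have : (MulAut.conj g) (h ^ q) = (g * h * g⁻¹) ^ q := by
        simp [MulAut.conj_apply, conj_pow]
      rw [this]
      exact Subgroup.subset_closure (Or.inl ⟨g * h * g⁻¹, hH.conj_mem h hh g, rfl⟩)
    · have : (MulAut.conj g) (pComm h g') = pComm (g * h * g⁻¹) (g * g' * g⁻¹) := by
        simp only [MulAut.conj_apply, pComm]
        group
      rw [this]
      exact Subgroup.subset_closure
        (Or.inr ⟨g * h * g⁻¹, hH.conj_mem h hh g, g * g' * g⁻¹, rfl⟩)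
  have h1 : (Subgroup.closure S).map (MulAut.conj g).toMonoidHom ≤ Subgroup.closure S := by
    rw [MonoidHom.map_closure]
    exact (Subgroup.closure_le _).2 himg
  exact h1 ⟨n, hn, by simp [MulAut.conj_apply]⟩

instance qcs_normal (q : ℕ) (G : Type*) [Group G] (i : ℕ) : (qcs q G i).Normal := by
  induction i with
  | zero => exact ⟨fun n _ g => Subgroup.mem_top _⟩
  | succ i ih => exact qVerbal_normal q ih


/-! The image of `[G,G] ≤ G^(2)` in `G / G^(3)` is central and has exponent `q` because
`[G^(2), G]` and `(G^(2))^q` lie in `G^(3)`. The quotient of `G / G^(3)` by that image is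
`G / G^(3)[G,G]`, and `G^(3)[G,G] = G^{q²}[G,G]` is the kernel of `G → G_ab/q²`: modulo `[G,G]`,
the generators `h^q` (`h ∈ G^(2) = G^q[G,G]`) of `G^(3)` are `q²`-th powers. -/

section QCentralSeries

variable {G : Type*} [Group G] (q : ℕ)

lemma pow_mem_qcs_succ {i : ℕ} {h : G} (hh : h ∈ qcs q G i) : h ^ q ∈ qcs q G (i + 1) :=
  Subgroup.subset_closure (Or.inl ⟨h, hh, rfl⟩)

lemma pComm_mem_qcs_succ {i : ℕ} {h : G} (hh : h ∈ qcs q G i) (g : G) :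
    pComm h g ∈ qcs q G (i + 1) :=
  Subgroup.subset_closure (Or.inr ⟨h, hh, g, rfl⟩)

open scoped commutatorElement in
lemma pComm_eq_commutatorElement (a b : G) : pComm a b = ⁅a⁻¹, b⁻¹⁆ := by
  simp [pComm, commutatorElement_def]

lemma pComm_mem_commutator (a b : G) : pComm a b ∈ commutator G := by
  rw [pComm_eq_commutatorElement]
  exact Subgroup.commutator_mem_commutator (Subgroup.mem_top _) (Subgroup.mem_top _)

lemma commutator_le_qcs_one : commutator G ≤ qcs q G 1 := by
  rw [commutator_eq_closure, Subgroup.closure_le]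
  rintro _ ⟨a, b, rfl⟩
  simpa [pComm_eq_commutatorElement] using
    pComm_mem_qcs_succ q (i := 0) (Subgroup.mem_top a⁻¹) b⁻¹

lemma commute_mk_of_mem_qcs {i : ℕ} {g : G} (hg : g ∈ qcs q G i)
    (y : G ⧸ qcs q G (i + 1)) : Commute (g : G ⧸ qcs q G (i + 1)) y := by
  induction y using QuotientGroup.induction_on with
  | H h =>
    have hgh : (h * g)⁻¹ * (g * h) = pComm g h := by simp only [pComm]; group
    exact (QuotientGroup.eq.2 (hgh ▸ pComm_mem_qcs_succ q hg h)).symm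

lemma mk_pow_eq_one_of_mem_qcs {i : ℕ} {g : G} (hg : g ∈ qcs q G i) :
    (g : G ⧸ qcs q G (i + 1)) ^ q = 1 := by
  rw [← QuotientGroup.mk_pow, QuotientGroup.eq_one_iff]
  exact pow_mem_qcs_succ q hg

end QCentralSeries

section AbelianizationModPow

variable {G : Type*} [Group G]

def abelianizationModPow (n : ℕ) :
    G →* Abelianization G ⧸ qPow n (⊤ : Subgroup (Abelianization G)) :=
  (QuotientGroup.mk' _).comp Abelianization.of

lemma abelianizationModPow_surjective (n : ℕ) :
    Function.Surjective (abelianizationModPow (G := G) n) :=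
  (QuotientGroup.mk'_surjective _).comp (QuotientGroup.mk'_surjective _)

lemma abelianizationModPow_pow (n : ℕ) (g : G) : abelianizationModPow n (g ^ n) = 1 := by
  rw [map_pow, abelianizationModPow, MonoidHom.comp_apply, QuotientGroup.mk'_apply,
    ← QuotientGroup.mk_pow, QuotientGroup.eq_one_iff]
  exact Subgroup.subset_closure ⟨_, Subgroup.mem_top _, rfl⟩

lemma commutator_le_ker_abelianizationModPow (n : ℕ) :
    commutator G ≤ (abelianizationModPow (G := G) n).ker :=
  Abelianization.commutator_subset_ker _

lemma qPow_top_le_ker_abelianizationModPow (n : ℕ) :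
    qPow n (⊤ : Subgroup G) ≤ (abelianizationModPow n).ker := by
  rw [qPow, Subgroup.closure_le]
  rintro _ ⟨g, -, rfl⟩
  exact abelianizationModPow_pow n g

lemma ker_abelianizationModPow (n : ℕ) :
    (abelianizationModPow (G := G) n).ker = qPow n ⊤ ⊔ commutator G := by
  refine le_antisymm ?_ (sup_le (qPow_top_le_ker_abelianizationModPow n)
    (commutator_le_ker_abelianizationModPow n))
  have hpow : qPow n (⊤ : Subgroup (Abelianization G)) ≤
      (qPow n (⊤ : Subgroup G)).map Abelianization.of := by
    rw [qPow, Subgroup.closure_le]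
    rintro _ ⟨a, -, rfl⟩
    obtain ⟨g, rfl⟩ := QuotientGroup.mk'_surjective (commutator G) a
    exact ⟨g ^ n, Subgroup.subset_closure ⟨g, Subgroup.mem_top g, rfl⟩, map_pow _ g n⟩
  calc (abelianizationModPow (G := G) n).ker
      = (qPow n (⊤ : Subgroup (Abelianization G))).comap Abelianization.of := by
        rw [abelianizationModPow, ← MonoidHom.comap_ker, QuotientGroup.ker_mk']
    _ ≤ ((qPow n (⊤ : Subgroup G)).map Abelianization.of).comap Abelianization.of :=
        Subgroup.comap_mono hpow
    _ = qPow n ⊤ ⊔ commutator G := by rw [Subgroup.comap_map_eq, Abelianization.ker_of]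

end AbelianizationModPow

section KernelModSquare

variable {G : Type*} [Group G] (q : ℕ)

lemma qPow_sq_top_le_qcs_two : qPow (q ^ 2) (⊤ : Subgroup G) ≤ qcs q G 2 := by
  rw [qPow, Subgroup.closure_le]
  rintro _ ⟨g, -, rfl⟩
  rw [sq, pow_mul]
  exact pow_mem_qcs_succ q (pow_mem_qcs_succ q (Subgroup.mem_top g))

-- `G^(2)` is generated by `q`-th powers and commutators, which `G → G_ab/q²` sends into the
-- `q`-torsion.
lemma qcs_one_le_comap_ker_pow :
    qcs q G 1 ≤ (powMonoidHom q).ker.comap (abelianizationModPow (G := G) (q ^ 2)) := by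
  rw [qcs, qVerbal, Subgroup.closure_le]
  rintro _ (⟨g, -, rfl⟩ | ⟨g, -, g', rfl⟩) <;>
    simp only [SetLike.mem_coe, Subgroup.mem_comap, MonoidHom.mem_ker, powMonoidHom_apply]
  · rw [← map_pow, ← pow_mul, ← sq]
    exact abelianizationModPow_pow _ g
  · rw [commutator_le_ker_abelianizationModPow _ (pComm_mem_commutator g g'), one_pow]

lemma qcs_two_le_ker_abelianizationModPow_sq :
    qcs q G 2 ≤ (abelianizationModPow (G := G) (q ^ 2)).ker := by
  rw [qcs, qVerbal, Subgroup.closure_le]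
  rintro _ (⟨h, hh, rfl⟩ | ⟨h, -, g, rfl⟩)
  · exact qcs_one_le_comap_ker_pow q hh
  · exact commutator_le_ker_abelianizationModPow _ (pComm_mem_commutator h g)

lemma ker_abelianizationModPow_sq :
    (abelianizationModPow (G := G) (q ^ 2)).ker = qcs q G 2 ⊔ commutator G := by
  refine le_antisymm ?_ (sup_le (qcs_two_le_ker_abelianizationModPow_sq q)
    (commutator_le_ker_abelianizationModPow _))
  rw [ker_abelianizationModPow]
  exact sup_le_sup_right (qPow_sq_top_le_qcs_two q) _

end KernelModSquare

theorem central_extension_G3 {G : Type*} [Group G] (q : ℕ) :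
    ∀ K : Subgroup (G ⧸ qcs q G 2),
      K = (commutator G).map (QuotientGroup.mk' (qcs q G 2)) →
      (∀ x ∈ K, ∀ y : G ⧸ qcs q G 2, x * y = y * x) ∧
      (∀ x ∈ K, x ^ q = 1) ∧
      Nonempty (((G ⧸ qcs q G 2) ⧸ Subgroup.normalClosure (K : Set (G ⧸ qcs q G 2))) ≃*
        (Abelianization G ⧸ qPow (q ^ 2) (⊤ : Subgroup (Abelianization G)))) := by
  rintro K rfl
  refine ⟨?_, ?_, ?_⟩
  · rintro _ ⟨g, hg, rfl⟩ y
    exact commute_mk_of_mem_qcs q (commutator_le_qcs_one q hg) y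
  · rintro _ ⟨g, hg, rfl⟩
    exact mk_pow_eq_one_of_mem_qcs q (commutator_le_qcs_one q hg)
  · set φ := QuotientGroup.lift (qcs q G 2) (abelianizationModPow (q ^ 2))
      (qcs_two_le_ker_abelianizationModPow_sq q)
    have hker : Subgroup.normalClosure
        ((commutator G).map (QuotientGroup.mk' (qcs q G 2)) : Set (G ⧸ qcs q G 2)) = φ.ker := by
      rw [QuotientGroup.ker_lift, ker_abelianizationModPow_sq, Subgroup.map_sup,
        (Subgroup.map_eq_bot_iff _).2 (QuotientGroup.ker_mk' _).ge, bot_sup_eq]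
      exact Subgroup.normalClosure_eq_self _
    exact ⟨(QuotientGroup.quotientMulEquivOfEq hker).trans
      (QuotientGroup.quotientKerEquivOfSurjective φ
        (QuotientGroup.lift_surjective_of_surjective _ _ (abelianizationModPow_surjective _) _))⟩
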